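/- Let g ≥ 1 be an odd integer and set a = (g+1)/2. Let x, y ∈ ℂ with x ≠ 0 and y² = x^{2g+1} + x. Then the point (u, v) := ((x² + 1)/x, y/x^a) satisfies v² = ∑_{k=0}^{⌊g/2⌋} (-1)^k · T(g, k) · u^{g-2k}, where T(g, k) = C(g-k, k) + C(g-k-1, k-1) is the integer (g/(g-k))·C(g-k, k). -/

import Mathlib

/-- The Lucas-coefficient triangle `T(g, k) = C(g-k, k) + C(g-k-1, k-1)` as an integer,
with the convention `C(m, -1) = 0`, so that `T(g, 0) = 1`. -/
def lucasT (g k : ℕ) : ℤ :=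
  (Nat.choose (g - k) k : ℤ) + if k = 0 then 0 else (Nat.choose (g - k - 1) (k - 1) : ℤ)

/-!
The Lucas polynomial `L_g(u) = ∑ₖ (-1)ᵏ T(g, k) u^{g-2k}` satisfies
`L_{g+2} = u L_{g+1} - L_g` (Pascal's rule for the `T(g, k)`), as does the Dickson polynomial
`D_g(u, 1)`, and the two agree for `g = 1, 2`; hence
`L_g(x + x⁻¹) = D_g(x + x⁻¹, 1) = x^g + x^{-g}`. On the other hand `(y / x^a)² = (x^{2g+1} + x) / x^{g+1} = x^g + x^{-g}` because `2a = g + 1`.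
-/

open Polynomial Finset

theorem lucasT_zero (n : ℕ) : lucasT n 0 = 1 := by
  simp [lucasT]

theorem lucasT_succ_add_succ (d k : ℕ) :
    lucasT (d + 1 + (k + 1)) (k + 1) = (d + 1).choose (k + 1) + d.choose k := by
  simp [lucasT]

theorem lucasT_add_two {n k : ℕ} (hk : k + 1 ≤ n) :
    lucasT (n + 2) (k + 1) = lucasT (n + 1) (k + 1) + lucasT n k := by
  obtain ⟨d, rfl⟩ := Nat.exists_eq_add_of_le hk
  rw [show k + 1 + d + 2 = d + 1 + 1 + (k + 1) by omega,
    show k + 1 + d + 1 = d + 1 + (k + 1) by omega, lucasT_succ_add_succ, lucasT_succ_add_succ]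
  rcases k with _ | j
  · simp [lucasT_zero, Nat.choose_succ_succ]
    ring
  · rw [show j + 1 + 1 + d = d + 1 + (j + 1) by omega, lucasT_succ_add_succ,
      Nat.choose_succ_succ (d + 1), Nat.choose_succ_succ d]
    push_cast
    ring

-- Fails for `n ≤ 1`: truncated subtraction makes `lucasT 0 1 = lucasT 1 1 = 1`.
theorem lucasT_eq_zero {n k : ℕ} (hn : 2 ≤ n) (hk : n < 2 * k) : lucasT n k = 0 := by
  simp only [lucasT, Nat.choose_eq_zero_of_lt (show n - k < k by omega),
    Nat.choose_eq_zero_of_lt (show n - k - 1 < k - 1 by omega)]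
  simp

variable (R : Type*) [CommRing R]

noncomputable def lucasPoly (n : ℕ) : R[X] :=
  ∑ k ∈ range (n / 2 + 1), (((-1 : ℤ) ^ k * lucasT n k : ℤ) : R[X]) * X ^ (n - 2 * k)

variable {R}

theorem lucasPoly_eq_sum_range {n N : ℕ} (hn : 2 ≤ n) (hN : n / 2 + 1 ≤ N) :
    lucasPoly R n =
      ∑ k ∈ range N, (((-1 : ℤ) ^ k * lucasT n k : ℤ) : R[X]) * X ^ (n - 2 * k) := by
  refine sum_subset (range_subset_range.mpr hN) fun k _ hk => ?_
  simp [lucasT_eq_zero hn (show n < 2 * k by simp only [mem_range] at hk; omega)]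

theorem lucasPoly_add_two {n : ℕ} (hn : 1 ≤ n) :
    lucasPoly R (n + 2) = X * lucasPoly R (n + 1) - lucasPoly R n := by
  have hM : (n + 2) / 2 + 1 = n / 2 + 1 + 1 := by omega
  rw [lucasPoly, hM, sum_range_succ' _ (n / 2 + 1),
    lucasPoly_eq_sum_range (N := n / 2 + 1 + 1) (by omega) (by omega),
    sum_range_succ' _ (n / 2 + 1), lucasPoly, mul_add, mul_sum, add_sub_right_comm,
    ← sum_sub_distrib]
  congr 1
  · refine sum_congr rfl fun k hk => ?_
    have hk : 2 * k ≤ n := by simp only [mem_range] at hk; omega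
    -- At `2 * k = n` the exponent `n + 1 - 2 * (k + 1)` is truncated, but its coefficient vanishes.
    have hX : (lucasT (n + 1) (k + 1) : R[X]) * X ^ (n + 2 - 2 * (k + 1)) =
        (lucasT (n + 1) (k + 1) : R[X]) * (X * X ^ (n + 1 - 2 * (k + 1))) := by
      rcases hk.lt_or_eq with hlt | rfl
      · rw [← pow_succ', show n + 1 - 2 * (k + 1) + 1 = n + 2 - 2 * (k + 1) by omega]
      · simp [lucasT_eq_zero (show 2 ≤ 2 * k + 1 by omega)
          (show 2 * k + 1 < 2 * (k + 1) by omega)]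
    rw [lucasT_add_two (by omega), show n + 2 - 2 * (k + 1) = n - 2 * k by omega] at *
    push_cast at hX ⊢
    linear_combination (-1 : R[X]) ^ (k + 1) * hX
  · simp [lucasT_zero, pow_succ']

theorem lucasPoly_eq_dickson {n : ℕ} (hn : 1 ≤ n) : lucasPoly R n = dickson 1 1 n := by
  induction n using Nat.strong_induction_on with
  | _ n ih =>
    match n, hn with
    | 1, _ => simp [lucasPoly, lucasT_zero]
    | 2, _ => simp [lucasPoly, lucasT, sum_range_succ]; ring
    | m + 3, _ => rw [lucasPoly_add_two (by omega), ih (m + 2) (by omega) (by omega),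
        ih (m + 1) (by omega) (by omega), dickson_add_two 1 1 (m + 1), map_one, one_mul]

theorem eval_lucasPoly (n : ℕ) (u : R) :
    (lucasPoly R n).eval u =
      ∑ k ∈ range (n / 2 + 1), (((-1 : ℤ) ^ k * lucasT n k : ℤ) : R) * u ^ (n - 2 * k) := by
  simp [lucasPoly, eval_finsetSum]

theorem hyperelliptic_morphism_general (g : ℕ) (hodd : Odd g)
    (x y : ℂ) (hx : x ≠ 0) (hC : y ^ 2 = x ^ (2 * g + 1) + x) :
    (y / x ^ ((g + 1) / 2)) ^ 2 =
      ∑ k ∈ Finset.range (g / 2 + 1),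
        ((-1 : ℤ) ^ k * lucasT g k : ℤ) * ((x ^ 2 + 1) / x) ^ (g - 2 * k) := by
  obtain ⟨t, rfl⟩ := hodd
  have hv : (y / x ^ ((2 * t + 1 + 1) / 2)) ^ 2 = x ^ (2 * t + 1) + x⁻¹ ^ (2 * t + 1) := by
    rw [show (2 * t + 1 + 1) / 2 = t + 1 by omega, div_pow, hC, inv_pow]
    field_simp
    ring
  have hu : (x ^ 2 + 1) / x = x + x⁻¹ := by field_simp
  rw [hv, hu, ← eval_lucasPoly, lucasPoly_eq_dickson (by omega),
    dickson_one_one_eval_add_inv x x⁻¹ (mul_inv_cancel₀ hx)]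

/-- For odd `g ≥ 1` and `a = (g+1)/2`, the map `φ(x, y) = ((x²+1)/x, y/x^a)` sends affine
points (with `x ≠ 0`) of the hyperelliptic curve `y² = x^{2g+1} + x` to affine points of
the curve `y² = ∑_{k=0}^{⌊g/2⌋} (-1)^k T(g, k) x^{g-2k}`. -/
theorem hyperelliptic_morphism (g : ℕ) (hg : 1 ≤ g) (hodd : Odd g)
    (x y : ℂ) (hx : x ≠ 0) (hC : y ^ 2 = x ^ (2 * g + 1) + x) :
    (y / x ^ ((g + 1) / 2)) ^ 2 =
      ∑ k ∈ Finset.range (g / 2 + 1),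
        ((-1 : ℤ) ^ k * lucasT g k : ℤ) * ((x ^ 2 + 1) / x) ^ (g - 2 * k) :=
  hyperelliptic_morphism_general g hodd x y hx hC
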